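/- Under the same interactive-communication Markov conditions (U_i conditionally independent of X_2 given (X_1, U^{i-1}) for i odd, and of X_1 given (X_2, U^{i-1}) for i even, with X_1 ⊥ X_2), one has H(U_i | U^{i-1}, X_2) = H(U_i | U^{i-1}) for i odd and H(U_i | U^{i-1}, X_1) = H(U_i | U^{i-1}) for i even. -/
import Mathlib


open Classical in
/-- Probability of an event `E` under a probability mass function `μ` on a finite
sample space `Ω`. -/
noncomputable def prEvent {Ω : Type*} [Fintype Ω] (μ : Ω → ℝ) (E : Ω → Prop) : ℝ :=
  ∑ ω, if E ω then μ ω else 0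

/-- Conditional Shannon entropy `H(f | g)` (natural log) of finite-valued random
variables on a finite probability space, with the convention `0 log 0 = 0`. -/
noncomputable def condEnt {Ω α β : Type*} [Fintype Ω] [Fintype α] [Fintype β]
    (μ : Ω → ℝ) (f : Ω → α) (g : Ω → β) : ℝ :=
  -∑ a : α, ∑ b : β,
    prEvent μ (fun ω => f ω = a ∧ g ω = b) *
      Real.log (prEvent μ (fun ω => f ω = a ∧ g ω = b) / prEvent μ (fun ω => g ω = b))

section helpers

variable {Ω : Type*} [Fintype Ω] {μ : Ω → ℝ}

lemma prEvent_congr {E E' : Ω → Prop} (h : ∀ ω, E ω ↔ E' ω) :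
    prEvent μ E = prEvent μ E' := by
  unfold prEvent
  refine Finset.sum_congr rfl fun ω _ => ?_
  by_cases hE : E ω
  · simp [hE, (h ω).mp hE]
  · have hE' : ¬ E' ω := fun h' => hE ((h ω).mpr h')
    simp [hE, hE']

lemma prEvent_nonneg (hμ0 : ∀ ω, 0 ≤ μ ω) (E : Ω → Prop) : 0 ≤ prEvent μ E :=
  Finset.sum_nonneg fun ω _ => by by_cases h : E ω <;> simp [prEvent, h, hμ0 ω]

lemma prEvent_mono (hμ0 : ∀ ω, 0 ≤ μ ω) {E E' : Ω → Prop} (h : ∀ ω, E ω → E' ω) :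
    prEvent μ E ≤ prEvent μ E' := by
  refine Finset.sum_le_sum fun ω _ => ?_
  by_cases hE : E ω
  · simp [hE, h ω hE]
  · simp only [hE, if_false]
    by_cases hE' : E' ω <;> simp [hE', hμ0 ω]

lemma prEvent_false : prEvent μ (fun _ => False) = 0 := by simp [prEvent]

lemma prEvent_true (hμ1 : ∑ ω, μ ω = 1) : prEvent μ (fun _ => True) = 1 := by
  simp [prEvent, hμ1]

lemma prEvent_sum_right {α : Type*} [Fintype α] (f : Ω → α) (E : Ω → Prop) :
    ∑ a : α, prEvent μ (fun ω => E ω ∧ f ω = a) = prEvent μ E := by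
  classical
  unfold prEvent
  rw [Finset.sum_comm]
  refine Finset.sum_congr rfl fun ω _ => ?_
  by_cases hE : E ω
  · simp [hE]
  · simp [hE]

/-- Key entropy lemma: conditional independence kills the extra conditioning. -/
lemma condEnt_pair_eq {α β δ : Type*} [Fintype α] [Fintype β] [Fintype δ]
    (hμ0 : ∀ ω, 0 ≤ μ ω) (f : Ω → α) (g : Ω → β) (h : Ω → δ)
    (hCI : ∀ a b c,
      prEvent μ (fun ω => f ω = a ∧ g ω = b ∧ h ω = c) * prEvent μ (fun ω => g ω = b) =
      prEvent μ (fun ω => f ω = a ∧ g ω = b) * prEvent μ (fun ω => g ω = b ∧ h ω = c)) :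
    condEnt μ f (fun ω => (g ω, h ω)) = condEnt μ f g := by
  unfold condEnt
  congr 1
  refine Finset.sum_congr rfl fun a _ => ?_
  rw [Fintype.sum_prod_type]
  refine Finset.sum_congr rfl fun b _ => ?_
  have hmarg : ∑ c : δ, prEvent μ (fun ω => f ω = a ∧ g ω = b ∧ h ω = c)
      = prEvent μ (fun ω => f ω = a ∧ g ω = b) := by
    rw [show (fun ω => f ω = a ∧ g ω = b) = (fun ω => (f ω = a ∧ g ω = b)) from rfl]
    rw [← prEvent_sum_right h (fun ω => f ω = a ∧ g ω = b)]
    exact Finset.sum_congr rfl fun c _ => prEvent_congr fun ω => by tauto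
  have key : ∀ c : δ,
      prEvent μ (fun ω => f ω = a ∧ (g ω, h ω) = (b, c)) *
        Real.log (prEvent μ (fun ω => f ω = a ∧ (g ω, h ω) = (b, c)) /
          prEvent μ (fun ω => (g ω, h ω) = (b, c))) =
      prEvent μ (fun ω => f ω = a ∧ g ω = b ∧ h ω = c) *
        Real.log (prEvent μ (fun ω => f ω = a ∧ g ω = b) /
          prEvent μ (fun ω => g ω = b)) := by
    intro c
    have e1 : prEvent μ (fun ω => f ω = a ∧ (g ω, h ω) = (b, c)) =
        prEvent μ (fun ω => f ω = a ∧ g ω = b ∧ h ω = c) :=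
      prEvent_congr fun ω => by simp [Prod.ext_iff, and_assoc]
    have e2 : prEvent μ (fun ω => (g ω, h ω) = (b, c)) =
        prEvent μ (fun ω => g ω = b ∧ h ω = c) :=
      prEvent_congr fun ω => by simp [Prod.ext_iff]
    rw [e1, e2]
    rcases eq_or_lt_of_le (prEvent_nonneg hμ0 (fun ω => f ω = a ∧ g ω = b ∧ h ω = c)) with h0 | h0
    · rw [← h0]; ring
    ·
      have hq : 0 < prEvent μ (fun ω => g ω = b ∧ h ω = c) :=
        lt_of_lt_of_le h0 (prEvent_mono hμ0 fun ω hw => hw.2)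
      have hr : 0 < prEvent μ (fun ω => f ω = a ∧ g ω = b) :=
        lt_of_lt_of_le h0 (prEvent_mono hμ0 fun ω hw => ⟨hw.1, hw.2.1⟩)
      have hs : 0 < prEvent μ (fun ω => g ω = b) :=
        lt_of_lt_of_le hq (prEvent_mono hμ0 fun ω hw => hw.1)
      have : prEvent μ (fun ω => f ω = a ∧ g ω = b ∧ h ω = c) / prEvent μ (fun ω => g ω = b ∧ h ω = c) =
          prEvent μ (fun ω => f ω = a ∧ g ω = b) / prEvent μ (fun ω => g ω = b) := by
        rw [div_eq_div_iff hq.ne' hs.ne']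
        exact hCI a b c
      rw [this]
  rw [Finset.sum_congr rfl fun c _ => key c, ← Finset.sum_mul, hmarg]

end helpers


private lemma cancel_aux {A B C S B1 B2 : ℝ} (h1 : A * B1 = C * B) (h2 : B * S = B1 * B2)
    (hA : A ≤ B1) (hC : C ≤ B1) (hA0 : 0 ≤ A) (hC0 : 0 ≤ C) (hB1 : 0 ≤ B1) :
    A * S = C * B2 := by
  rcases eq_or_lt_of_le hB1 with h0 | h0
  · have hA' : A = 0 := le_antisymm (h0 ▸ hA) hA0
    have hC' : C = 0 := le_antisymm (h0 ▸ hC) hC0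
    rw [hA', hC']; ring
  · apply mul_right_cancel₀ h0.ne'
    linear_combination S * h1 + C * h2

private lemma cancel_aux2 {A C D F S B2 : ℝ} (hstar : A * S = C * B2) (hci : F * S = D * B2)
    (hAS : A ≤ S) (hCS : C ≤ S) (hA0 : 0 ≤ A) (hC0 : 0 ≤ C) (hS : 0 ≤ S) :
    A * D = C * F := by
  rcases eq_or_lt_of_le hS with h0 | h0
  · have hA' : A = 0 := le_antisymm (h0 ▸ hAS) hA0
    have hC' : C = 0 := le_antisymm (h0 ▸ hCS) hC0
    rw [hA', hC']; ring
  · apply mul_right_cancel₀ (mul_pos h0 h0).ne'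
    linear_combination (D * S) * hstar - (C * S) * hci

/-- Under the interactive-communication Markov conditions
(`U i ⫫ X₂ | (X₁, U^{i-1})` for `i` odd, `U i ⫫ X₁ | (X₂, U^{i-1})` for `i` even,
with `X₁ ⟂ X₂` independent and `U 0` constant), one has
`H(U i | U^{i-1}, X₂) = H(U i | U^{i-1})` for `i` odd and
`H(U i | U^{i-1}, X₁) = H(U i | U^{i-1})` for `i` even. -/
theorem stmt11 {Ω α₁ α₂ γ : Type*} [Fintype Ω] [Fintype α₁] [Fintype α₂] [Fintype γ]
    (μ : Ω → ℝ) (hμ0 : ∀ ω, 0 ≤ μ ω) (hμ1 : ∑ ω, μ ω = 1)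
    (X₁ : Ω → α₁) (X₂ : Ω → α₂) (U : ℕ → Ω → γ)
    (hU0 : ∀ ω ω', U 0 ω = U 0 ω')
    (hindep : ∀ x₁ x₂,
      prEvent μ (fun ω => X₁ ω = x₁ ∧ X₂ ω = x₂) =
        prEvent μ (fun ω => X₁ ω = x₁) * prEvent μ (fun ω => X₂ ω = x₂))
    (hodd : ∀ i, 1 ≤ i → Odd i → ∀ (ui : γ) (x₁ : α₁) (x₂ : α₂) (u : ℕ → γ),
      prEvent μ (fun ω => U i ω = ui ∧ X₂ ω = x₂ ∧ X₁ ω = x₁ ∧ ∀ j < i, U j ω = u j) *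
        prEvent μ (fun ω => X₁ ω = x₁ ∧ ∀ j < i, U j ω = u j) =
      prEvent μ (fun ω => U i ω = ui ∧ X₁ ω = x₁ ∧ ∀ j < i, U j ω = u j) *
        prEvent μ (fun ω => X₂ ω = x₂ ∧ X₁ ω = x₁ ∧ ∀ j < i, U j ω = u j))
    (heven : ∀ i, 1 ≤ i → Even i → ∀ (ui : γ) (x₁ : α₁) (x₂ : α₂) (u : ℕ → γ),
      prEvent μ (fun ω => U i ω = ui ∧ X₁ ω = x₁ ∧ X₂ ω = x₂ ∧ ∀ j < i, U j ω = u j) *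
        prEvent μ (fun ω => X₂ ω = x₂ ∧ ∀ j < i, U j ω = u j) =
      prEvent μ (fun ω => U i ω = ui ∧ X₂ ω = x₂ ∧ ∀ j < i, U j ω = u j) *
        prEvent μ (fun ω => X₁ ω = x₁ ∧ X₂ ω = x₂ ∧ ∀ j < i, U j ω = u j)) :
    ∀ i, 1 ≤ i →
      (Odd i →
        condEnt μ (U i) (fun ω => ((fun j : Fin i => U j ω, X₂ ω))) =
          condEnt μ (U i) (fun ω => fun j : Fin i => U j ω)) ∧
      (Even i →
        condEnt μ (U i) (fun ω => ((fun j : Fin i => U j ω, X₁ ω))) =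
          condEnt μ (U i) (fun ω => fun j : Fin i => U j ω)) := by
  -- Ω is nonempty since the total mass is 1.
  have hne : Nonempty Ω := by
    rcases isEmpty_or_nonempty Ω with h | h
    · rw [Finset.univ_eq_empty, Finset.sum_empty] at hμ1; norm_num at hμ1
    · exact h
  obtain ⟨ω₀⟩ := hne
  -- events implying False have probability zero
  have hE0 : ∀ (E' : Ω → Prop), (∀ ω, ¬ E' ω) → prEvent μ E' = 0 := by
    intro E' h
    refine le_antisymm ?_ (prEvent_nonneg hμ0 E')
    have := prEvent_mono (μ := μ) hμ0 (E := E') (E' := fun _ => False) (fun ω hw => (h ω hw))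
    simpa [prEvent_false] using this
  -- successor history decomposition
  have hsucc : ∀ (i : ℕ) (u : ℕ → γ) (ω : Ω),
      (∀ j < i + 1, U j ω = u j) ↔ (U i ω = u i ∧ ∀ j < i, U j ω = u j) := by
    intro i u ω
    constructor
    · intro h
      exact ⟨h i (Nat.lt_succ_self i), fun j hj => h j (hj.trans (Nat.lt_succ_self i))⟩
    · rintro ⟨h1, h2⟩ j hj
      rcases Nat.lt_succ_iff_lt_or_eq.mp hj with h | h
      · exact h2 j h
      · exact h ▸ h1
  -- the "star" property for odd rounds, from the Markov condition and rectangle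
  have star_odd : ∀ i, 1 ≤ i → Odd i →
      (∀ (x₁ : α₁) (x₂ : α₂) (u : ℕ → γ),
        prEvent μ (fun ω => X₁ ω = x₁ ∧ X₂ ω = x₂ ∧ ∀ j < i, U j ω = u j) *
          prEvent μ (fun ω => ∀ j < i, U j ω = u j) =
        prEvent μ (fun ω => X₁ ω = x₁ ∧ ∀ j < i, U j ω = u j) *
          prEvent μ (fun ω => X₂ ω = x₂ ∧ ∀ j < i, U j ω = u j)) →
      ∀ (ui : γ) (x₁ : α₁) (x₂ : α₂) (u : ℕ → γ),
        prEvent μ (fun ω => U i ω = ui ∧ X₁ ω = x₁ ∧ X₂ ω = x₂ ∧ ∀ j < i, U j ω = u j) *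
          prEvent μ (fun ω => ∀ j < i, U j ω = u j) =
        prEvent μ (fun ω => U i ω = ui ∧ X₁ ω = x₁ ∧ ∀ j < i, U j ω = u j) *
          prEvent μ (fun ω => X₂ ω = x₂ ∧ ∀ j < i, U j ω = u j) := by
    intro i hi hoi hR ui x₁ x₂ u
    have hM := hodd i hi hoi ui x₁ x₂ u
    have hA : prEvent μ (fun ω => U i ω = ui ∧ X₂ ω = x₂ ∧ X₁ ω = x₁ ∧ ∀ j < i, U j ω = u j)
        = prEvent μ (fun ω => U i ω = ui ∧ X₁ ω = x₁ ∧ X₂ ω = x₂ ∧ ∀ j < i, U j ω = u j) :=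
      prEvent_congr fun ω => by tauto
    have hB : prEvent μ (fun ω => X₂ ω = x₂ ∧ X₁ ω = x₁ ∧ ∀ j < i, U j ω = u j)
        = prEvent μ (fun ω => X₁ ω = x₁ ∧ X₂ ω = x₂ ∧ ∀ j < i, U j ω = u j) :=
      prEvent_congr fun ω => by tauto
    rw [hA, hB] at hM
    exact cancel_aux hM (hR x₁ x₂ u)
      (prEvent_mono hμ0 fun ω hw => ⟨hw.2.1, hw.2.2.2⟩)
      (prEvent_mono hμ0 fun ω hw => ⟨hw.2.1, hw.2.2⟩)
      (prEvent_nonneg hμ0 _) (prEvent_nonneg hμ0 _) (prEvent_nonneg hμ0 _)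
  -- the "star" property for even rounds
  have star_even : ∀ i, 1 ≤ i → Even i →
      (∀ (x₁ : α₁) (x₂ : α₂) (u : ℕ → γ),
        prEvent μ (fun ω => X₁ ω = x₁ ∧ X₂ ω = x₂ ∧ ∀ j < i, U j ω = u j) *
          prEvent μ (fun ω => ∀ j < i, U j ω = u j) =
        prEvent μ (fun ω => X₁ ω = x₁ ∧ ∀ j < i, U j ω = u j) *
          prEvent μ (fun ω => X₂ ω = x₂ ∧ ∀ j < i, U j ω = u j)) →
      ∀ (ui : γ) (x₁ : α₁) (x₂ : α₂) (u : ℕ → γ),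
        prEvent μ (fun ω => U i ω = ui ∧ X₁ ω = x₁ ∧ X₂ ω = x₂ ∧ ∀ j < i, U j ω = u j) *
          prEvent μ (fun ω => ∀ j < i, U j ω = u j) =
        prEvent μ (fun ω => U i ω = ui ∧ X₂ ω = x₂ ∧ ∀ j < i, U j ω = u j) *
          prEvent μ (fun ω => X₁ ω = x₁ ∧ ∀ j < i, U j ω = u j) := by
    intro i hi hei hR ui x₁ x₂ u
    have hM := heven i hi hei ui x₁ x₂ u
    have hB : prEvent μ (fun ω => X₁ ω = x₁ ∧ X₂ ω = x₂ ∧ ∀ j < i, U j ω = u j) *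
          prEvent μ (fun ω => ∀ j < i, U j ω = u j) =
        prEvent μ (fun ω => X₂ ω = x₂ ∧ ∀ j < i, U j ω = u j) *
          prEvent μ (fun ω => X₁ ω = x₁ ∧ ∀ j < i, U j ω = u j) := by
      rw [hR x₁ x₂ u]; ring
    exact cancel_aux hM hB
      (prEvent_mono hμ0 fun ω hw => ⟨hw.2.2.1, hw.2.2.2⟩)
      (prEvent_mono hμ0 fun ω hw => ⟨hw.2.1, hw.2.2⟩)
      (prEvent_nonneg hμ0 _) (prEvent_nonneg hμ0 _) (prEvent_nonneg hμ0 _)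
  -- marginalization identities
  have hmarg1 : ∀ (i : ℕ) (ui : γ) (x₂ : α₂) (u : ℕ → γ),
      prEvent μ (fun ω => U i ω = ui ∧ X₂ ω = x₂ ∧ ∀ j < i, U j ω = u j) =
      ∑ x₁ : α₁, prEvent μ (fun ω => U i ω = ui ∧ X₁ ω = x₁ ∧ X₂ ω = x₂ ∧ ∀ j < i, U j ω = u j) := by
    intro i ui x₂ u
    rw [← prEvent_sum_right X₁ (fun ω => U i ω = ui ∧ X₂ ω = x₂ ∧ ∀ j < i, U j ω = u j)]
    exact Finset.sum_congr rfl fun x _ => prEvent_congr fun ω => by tauto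
  have hmarg1' : ∀ (i : ℕ) (ui : γ) (u : ℕ → γ),
      prEvent μ (fun ω => U i ω = ui ∧ ∀ j < i, U j ω = u j) =
      ∑ x₁ : α₁, prEvent μ (fun ω => U i ω = ui ∧ X₁ ω = x₁ ∧ ∀ j < i, U j ω = u j) := by
    intro i ui u
    rw [← prEvent_sum_right X₁ (fun ω => U i ω = ui ∧ ∀ j < i, U j ω = u j)]
    exact Finset.sum_congr rfl fun x _ => prEvent_congr fun ω => by tauto
  have hmarg2 : ∀ (i : ℕ) (ui : γ) (x₁ : α₁) (u : ℕ → γ),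
      prEvent μ (fun ω => U i ω = ui ∧ X₁ ω = x₁ ∧ ∀ j < i, U j ω = u j) =
      ∑ x₂ : α₂, prEvent μ (fun ω => U i ω = ui ∧ X₁ ω = x₁ ∧ X₂ ω = x₂ ∧ ∀ j < i, U j ω = u j) := by
    intro i ui x₁ u
    rw [← prEvent_sum_right X₂ (fun ω => U i ω = ui ∧ X₁ ω = x₁ ∧ ∀ j < i, U j ω = u j)]
    exact Finset.sum_congr rfl fun x _ => prEvent_congr fun ω => by tauto
  have hmarg2' : ∀ (i : ℕ) (ui : γ) (u : ℕ → γ),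
      prEvent μ (fun ω => U i ω = ui ∧ ∀ j < i, U j ω = u j) =
      ∑ x₂ : α₂, prEvent μ (fun ω => U i ω = ui ∧ X₂ ω = x₂ ∧ ∀ j < i, U j ω = u j) := by
    intro i ui u
    rw [← prEvent_sum_right X₂ (fun ω => U i ω = ui ∧ ∀ j < i, U j ω = u j)]
    exact Finset.sum_congr rfl fun x _ => prEvent_congr fun ω => by tauto
  -- the rectangle property, by induction on the round
  have rect : ∀ i, 1 ≤ i → ∀ (x₁ : α₁) (x₂ : α₂) (u : ℕ → γ),
      prEvent μ (fun ω => X₁ ω = x₁ ∧ X₂ ω = x₂ ∧ ∀ j < i, U j ω = u j) *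
        prEvent μ (fun ω => ∀ j < i, U j ω = u j) =
      prEvent μ (fun ω => X₁ ω = x₁ ∧ ∀ j < i, U j ω = u j) *
        prEvent μ (fun ω => X₂ ω = x₂ ∧ ∀ j < i, U j ω = u j) := by
    intro i hi
    induction i, hi using Nat.le_induction with
    | base =>
      intro x₁ x₂ u
      by_cases h : u 0 = U 0 ω₀
      · have hall : ∀ ω, (∀ j < 1, U j ω = u j) ↔ True := by
          intro ω
          simp only [Nat.lt_one_iff, iff_true]
          rintro j rfl
          rw [hU0 ω ω₀, ← h]
        have e1 : prEvent μ (fun ω => X₁ ω = x₁ ∧ X₂ ω = x₂ ∧ ∀ j < 1, U j ω = u j) =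
            prEvent μ (fun ω => X₁ ω = x₁ ∧ X₂ ω = x₂) :=
          prEvent_congr fun ω => by rw [hall ω]; tauto
        have e2 : prEvent μ (fun ω => ∀ j < 1, U j ω = u j) = 1 := by
          rw [prEvent_congr fun ω => (hall ω)]
          exact prEvent_true hμ1
        have e3 : prEvent μ (fun ω => X₁ ω = x₁ ∧ ∀ j < 1, U j ω = u j) =
            prEvent μ (fun ω => X₁ ω = x₁) :=
          prEvent_congr fun ω => by rw [hall ω]; tauto
        have e4 : prEvent μ (fun ω => X₂ ω = x₂ ∧ ∀ j < 1, U j ω = u j) =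
            prEvent μ (fun ω => X₂ ω = x₂) :=
          prEvent_congr fun ω => by rw [hall ω]; tauto
        rw [e1, e2, e3, e4, mul_one]
        exact hindep x₁ x₂
      · have hnone : ∀ ω, ¬ (∀ j < 1, U j ω = u j) := by
          intro ω hw
          exact h ((hw 0 Nat.one_pos).symm.trans (hU0 ω ω₀))
        have e2 : prEvent μ (fun ω => ∀ j < 1, U j ω = u j) = 0 := hE0 _ hnone
        have e3 : prEvent μ (fun ω => X₁ ω = x₁ ∧ ∀ j < 1, U j ω = u j) = 0 :=
          hE0 _ fun ω hw => hnone ω hw.2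
        rw [e2, e3, mul_zero, zero_mul]
    | succ i hi ih =>
      intro x₁ x₂ u
      -- rewrite all four events using hsucc
      have e1 : prEvent μ (fun ω => X₁ ω = x₁ ∧ X₂ ω = x₂ ∧ ∀ j < i + 1, U j ω = u j) =
          prEvent μ (fun ω => U i ω = u i ∧ X₁ ω = x₁ ∧ X₂ ω = x₂ ∧ ∀ j < i, U j ω = u j) :=
        prEvent_congr fun ω => by rw [hsucc i u ω]; tauto
      have e2 : prEvent μ (fun ω => ∀ j < i + 1, U j ω = u j) =
          prEvent μ (fun ω => U i ω = u i ∧ ∀ j < i, U j ω = u j) :=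
        prEvent_congr fun ω => by rw [hsucc i u ω]
      have e3 : prEvent μ (fun ω => X₁ ω = x₁ ∧ ∀ j < i + 1, U j ω = u j) =
          prEvent μ (fun ω => U i ω = u i ∧ X₁ ω = x₁ ∧ ∀ j < i, U j ω = u j) :=
        prEvent_congr fun ω => by rw [hsucc i u ω]; tauto
      have e4 : prEvent μ (fun ω => X₂ ω = x₂ ∧ ∀ j < i + 1, U j ω = u j) =
          prEvent μ (fun ω => U i ω = u i ∧ X₂ ω = x₂ ∧ ∀ j < i, U j ω = u j) :=
        prEvent_congr fun ω => by rw [hsucc i u ω]; tauto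
      rw [e1, e2, e3, e4]
      rcases Nat.even_or_odd i with hei | hoi
      · -- even round: star_even gives A * S = F * B1, sum over x₂ gives C * S = D * B1
        have hstar := star_even i hi hei
        have hci : prEvent μ (fun ω => U i ω = u i ∧ X₁ ω = x₁ ∧ ∀ j < i, U j ω = u j) *
            prEvent μ (fun ω => ∀ j < i, U j ω = u j) =
            prEvent μ (fun ω => U i ω = u i ∧ ∀ j < i, U j ω = u j) *
            prEvent μ (fun ω => X₁ ω = x₁ ∧ ∀ j < i, U j ω = u j) := by
          rw [hmarg2 i (u i) x₁ u, hmarg2' i (u i) u, Finset.sum_mul, Finset.sum_mul]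
          exact Finset.sum_congr rfl fun x₂' _ => hstar ih (u i) x₁ x₂' u
        have hA : prEvent μ (fun ω => U i ω = u i ∧ X₁ ω = x₁ ∧ X₂ ω = x₂ ∧ ∀ j < i, U j ω = u j) *
            prEvent μ (fun ω => ∀ j < i, U j ω = u j) =
            prEvent μ (fun ω => U i ω = u i ∧ X₂ ω = x₂ ∧ ∀ j < i, U j ω = u j) *
            prEvent μ (fun ω => X₁ ω = x₁ ∧ ∀ j < i, U j ω = u j) := hstar ih (u i) x₁ x₂ u
        have := cancel_aux2 hA hci
          (prEvent_mono hμ0 fun ω hw => hw.2.2.2)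
          (prEvent_mono hμ0 fun ω hw => hw.2.2)
          (prEvent_nonneg hμ0 _) (prEvent_nonneg hμ0 _) (prEvent_nonneg hμ0 _)
        linear_combination this
      · -- odd round: star_odd gives A * S = C * B2, sum over x₁ gives F * S = D * B2
        have hstar := star_odd i hi hoi
        have hci : prEvent μ (fun ω => U i ω = u i ∧ X₂ ω = x₂ ∧ ∀ j < i, U j ω = u j) *
            prEvent μ (fun ω => ∀ j < i, U j ω = u j) =
            prEvent μ (fun ω => U i ω = u i ∧ ∀ j < i, U j ω = u j) *
            prEvent μ (fun ω => X₂ ω = x₂ ∧ ∀ j < i, U j ω = u j) := by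
          rw [hmarg1 i (u i) x₂ u, hmarg1' i (u i) u, Finset.sum_mul, Finset.sum_mul]
          exact Finset.sum_congr rfl fun x₁' _ => hstar ih (u i) x₁' x₂ u
        exact cancel_aux2 (hstar ih (u i) x₁ x₂ u) hci
          (prEvent_mono hμ0 fun ω hw => hw.2.2.2)
          (prEvent_mono hμ0 fun ω hw => hw.2.2)
          (prEvent_nonneg hμ0 _) (prEvent_nonneg hμ0 _) (prEvent_nonneg hμ0 _)
  -- conditional independence of U i from the other source given the history
  have ci_odd : ∀ i, 1 ≤ i → Odd i → ∀ (ui : γ) (x₂ : α₂) (u : ℕ → γ),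
      prEvent μ (fun ω => U i ω = ui ∧ X₂ ω = x₂ ∧ ∀ j < i, U j ω = u j) *
        prEvent μ (fun ω => ∀ j < i, U j ω = u j) =
      prEvent μ (fun ω => U i ω = ui ∧ ∀ j < i, U j ω = u j) *
        prEvent μ (fun ω => X₂ ω = x₂ ∧ ∀ j < i, U j ω = u j) := by
    intro i hi hoi ui x₂ u
    rw [hmarg1 i ui x₂ u, hmarg1' i ui u, Finset.sum_mul, Finset.sum_mul]
    exact Finset.sum_congr rfl fun x₁' _ => star_odd i hi hoi (rect i hi) ui x₁' x₂ u
  have ci_even : ∀ i, 1 ≤ i → Even i → ∀ (ui : γ) (x₁ : α₁) (u : ℕ → γ),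
      prEvent μ (fun ω => U i ω = ui ∧ X₁ ω = x₁ ∧ ∀ j < i, U j ω = u j) *
        prEvent μ (fun ω => ∀ j < i, U j ω = u j) =
      prEvent μ (fun ω => U i ω = ui ∧ ∀ j < i, U j ω = u j) *
        prEvent μ (fun ω => X₁ ω = x₁ ∧ ∀ j < i, U j ω = u j) := by
    intro i hi hei ui x₁ u
    rw [hmarg2 i ui x₁ u, hmarg2' i ui u, Finset.sum_mul, Finset.sum_mul]
    exact Finset.sum_congr rfl fun x₂' _ => star_even i hi hei (rect i hi) ui x₁ x₂' u
  -- conclude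
  intro i hi
  have hi0 : 0 < i := hi
  -- translating tuple equality into history events
  have htup : ∀ (b : Fin i → γ),
      ∃ u : ℕ → γ, ∀ ω, ((fun j : Fin i => U j ω) = b ↔ ∀ j < i, U j ω = u j) := by
    intro b
    refine ⟨fun j => if hj : j < i then b ⟨j, hj⟩ else b ⟨0, hi0⟩, fun ω => ?_⟩
    rw [funext_iff]
    constructor
    · intro h j hj
      have := h ⟨j, hj⟩
      simpa [hj] using this
    · intro h j
      have := h j.1 j.2
      simpa [j.2] using this
  constructor
  · intro hoi
    refine condEnt_pair_eq hμ0 (U i) (fun ω (j : Fin i) => U j ω) X₂ fun a b c => ?_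
    obtain ⟨u, hu⟩ := htup b
    have f1 : prEvent μ (fun ω => U i ω = a ∧ (fun j : Fin i => U j ω) = b ∧ X₂ ω = c) =
        prEvent μ (fun ω => U i ω = a ∧ X₂ ω = c ∧ ∀ j < i, U j ω = u j) :=
      prEvent_congr fun ω => by rw [hu ω]; tauto
    have f2 : prEvent μ (fun ω => (fun j : Fin i => U j ω) = b) =
        prEvent μ (fun ω => ∀ j < i, U j ω = u j) :=
      prEvent_congr fun ω => hu ω
    have f3 : prEvent μ (fun ω => U i ω = a ∧ (fun j : Fin i => U j ω) = b) =
        prEvent μ (fun ω => U i ω = a ∧ ∀ j < i, U j ω = u j) :=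
      prEvent_congr fun ω => by rw [hu ω]
    have f4 : prEvent μ (fun ω => (fun j : Fin i => U j ω) = b ∧ X₂ ω = c) =
        prEvent μ (fun ω => X₂ ω = c ∧ ∀ j < i, U j ω = u j) :=
      prEvent_congr fun ω => by rw [hu ω]; tauto
    rw [f1, f2, f3, f4]
    exact ci_odd i hi hoi a c u
  · intro hei
    refine condEnt_pair_eq hμ0 (U i) (fun ω (j : Fin i) => U j ω) X₁ fun a b c => ?_
    obtain ⟨u, hu⟩ := htup b
    have f1 : prEvent μ (fun ω => U i ω = a ∧ (fun j : Fin i => U j ω) = b ∧ X₁ ω = c) =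
        prEvent μ (fun ω => U i ω = a ∧ X₁ ω = c ∧ ∀ j < i, U j ω = u j) :=
      prEvent_congr fun ω => by rw [hu ω]; tauto
    have f2 : prEvent μ (fun ω => (fun j : Fin i => U j ω) = b) =
        prEvent μ (fun ω => ∀ j < i, U j ω = u j) :=
      prEvent_congr fun ω => hu ω
    have f3 : prEvent μ (fun ω => U i ω = a ∧ (fun j : Fin i => U j ω) = b) =
        prEvent μ (fun ω => U i ω = a ∧ ∀ j < i, U j ω = u j) :=
      prEvent_congr fun ω => by rw [hu ω]
    have f4 : prEvent μ (fun ω => (fun j : Fin i => U j ω) = b ∧ X₁ ω = c) =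
        prEvent μ (fun ω => X₁ ω = c ∧ ∀ j < i, U j ω = u j) :=
      prEvent_congr fun ω => by rw [hu ω]; tauto
    rw [f1, f2, f3, f4]
    exact ci_even i hi hei a c u
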